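/- For every a>0, T>0 and real p≥1, ∫₀^T r^{p+1} e^{a√(T²−r²)} / √(T²−r²) dr = Σ_{k=0}^∞ (a^k/k!) · (T^{p+k+1}/2) · Γ(p/2+1) Γ((k+1)/2) / Γ((p+k+3)/2), the series on the right converging absolutely. -/

import Mathlib

/-! Write `z = √(T² - r²)`. Expanding `exp (a z) = ∑ (a z)^k / k!` and integrating termwise is
legitimate by dominated convergence, since `z ≤ T` gives the summable majorant
`(|a| T)^k / k! · r^(p+1) / z`. The substitution `r = T √x` turns the `k`-th integral
`∫₀^T r^(p+1) z^(k-1) dr` into `T^(p+k+1) / 2` times the Beta integral `B(p/2 + 1, (k+1)/2)`. -/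

open MeasureTheory Real Set

section Beta

variable {u v : ℝ}

lemma ofReal_rpow_mul_one_sub_rpow {x : ℝ} (hx : x ∈ Ioo (0:ℝ) 1) :
    ((x ^ u * (1 - x) ^ v : ℝ) : ℂ)
      = (x : ℂ) ^ ((u + 1 : ℂ) - 1) * (1 - (x : ℂ)) ^ ((v + 1 : ℂ) - 1) := by
  rw [Complex.ofReal_mul, Complex.ofReal_cpow hx.1.le, Complex.ofReal_cpow (by linarith [hx.2])]
  push_cast
  ring_nf

theorem integrableOn_rpow_mul_one_sub_rpow (hu : -1 < u) (hv : -1 < v) :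
    IntegrableOn (fun x : ℝ => x ^ u * (1 - x) ^ v) (Ioo 0 1) := by
  have h := Complex.betaIntegral_convergent (u := u + 1) (v := v + 1)
    (by simp; linarith) (by simp; linarith)
  rw [intervalIntegrable_iff_integrableOn_Ioo_of_le zero_le_one] at h
  refine IntegrableOn.congr_fun (Integrable.re h) (fun x hx => ?_) measurableSet_Ioo
  rw [← ofReal_rpow_mul_one_sub_rpow hx, RCLike.re_to_complex, Complex.ofReal_re]

theorem integral_rpow_mul_one_sub_rpow (hu : -1 < u) (hv : -1 < v) :
    ∫ x in Ioo (0:ℝ) 1, x ^ u * (1 - x) ^ v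
      = Gamma (u + 1) * Gamma (v + 1) / Gamma (u + v + 2) := by
  have h := Complex.betaIntegral_eq_Gamma_mul_div (u + 1) (v + 1)
    (by simp; linarith) (by simp; linarith)
  rw [Complex.betaIntegral, intervalIntegral.integral_of_le zero_le_one,
    integral_Ioc_eq_integral_Ioo,
    ← setIntegral_congr_fun measurableSet_Ioo (fun x hx => ofReal_rpow_mul_one_sub_rpow hx),
    integral_complex_ofReal] at h
  apply Complex.ofReal_injective
  rw [h, show (u + 1 : ℂ) + (v + 1) = ((u + v + 2 : ℝ) : ℂ) by push_cast; ring]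
  push_cast [← Complex.Gamma_ofReal]
  rfl

end Beta

section SqrtSubstitution

variable {E : Type*} [NormedAddCommGroup E] [NormedSpace ℝ E] {T : ℝ}

lemma image_mul_sqrt_Ioo (hT : 0 < T) : (fun x => T * √x) '' Ioo 0 1 = Ioo 0 T := by
  ext r
  constructor
  · rintro ⟨x, ⟨hx0, hx1⟩, rfl⟩
    have : √x < 1 := (sqrt_lt' one_pos).2 (by simpa using hx1)
    exact ⟨by positivity, by nlinarith⟩
  · rintro ⟨hr0, hrT⟩
    refine ⟨(r / T) ^ 2, ⟨by positivity, ?_⟩, ?_⟩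
    · rw [sq_lt_one_iff₀ (by positivity)]
      exact (div_lt_one hT).2 hrT
    · simp only [sqrt_sq (div_pos hr0 hT).le]
      field_simp

lemma injOn_mul_sqrt (hT : T ≠ 0) : InjOn (fun x => T * √x) (Ioi 0) := fun x hx y hy h => by
  rwa [mul_right_inj' hT, sqrt_inj (le_of_lt hx) (le_of_lt hy)] at h

lemma hasDerivAt_mul_sqrt {x : ℝ} (hx : 0 < x) :
    HasDerivAt (fun x => T * √x) (T / (2 * √x)) x := by
  simpa [div_eq_mul_inv] using (hasDerivAt_sqrt hx.ne').const_mul T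

theorem integrableOn_Ioo_iff_comp_mul_sqrt (hT : 0 < T) (f : ℝ → E) :
    IntegrableOn f (Ioo 0 T) ↔
      IntegrableOn (fun x => (T / (2 * √x)) • f (T * √x)) (Ioo 0 1) := by
  rw [← image_mul_sqrt_Ioo hT, integrableOn_image_iff_integrableOn_abs_deriv_smul
    measurableSet_Ioo (fun x hx => (hasDerivAt_mul_sqrt hx.1).hasDerivWithinAt)
    ((injOn_mul_sqrt hT.ne').mono Ioo_subset_Ioi_self)]
  refine integrableOn_congr_fun (fun x hx => ?_) measurableSet_Ioo
  rw [abs_of_pos (by have := hx.1; positivity)]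

theorem integral_Ioo_eq_integral_comp_mul_sqrt (hT : 0 < T) (f : ℝ → E) :
    ∫ r in Ioo 0 T, f r = ∫ x in Ioo 0 1, (T / (2 * √x)) • f (T * √x) := by
  rw [← image_mul_sqrt_Ioo hT, integral_image_eq_integral_abs_deriv_smul
    measurableSet_Ioo (fun x hx => (hasDerivAt_mul_sqrt hx.1).hasDerivWithinAt)
    ((injOn_mul_sqrt hT.ne').mono Ioo_subset_Ioi_self)]
  refine setIntegral_congr_fun measurableSet_Ioo (fun x hx => ?_)
  rw [abs_of_pos (by have := hx.1; positivity)]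

end SqrtSubstitution

/-- At `r = T` this is the junk value `0 / 0 = 0` rather than `r^(p+1) z^(k-1)`, so all integrals
are taken over the open interval `Ioo 0 T`. -/
noncomputable def momentKernel (T p : ℝ) (k : ℕ) (r : ℝ) : ℝ :=
  r ^ (p + 1) * √(T ^ 2 - r ^ 2) ^ k / √(T ^ 2 - r ^ 2)

section MomentKernel

variable {T p : ℝ}

lemma mul_momentKernel_mul_sqrt (hT : 0 < T) (k : ℕ) {x : ℝ} (hx : x ∈ Ioo (0:ℝ) 1) :
    T / (2 * √x) * momentKernel T p k (T * √x)
      = T ^ (p + k + 1) / 2 * (x ^ (p / 2) * (1 - x) ^ (((k : ℝ) - 1) / 2)) := by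
  obtain ⟨hx0, hx1⟩ := hx
  have hs : 0 < √x := sqrt_pos.2 hx0
  have ht : 0 < √(1 - x) := sqrt_pos.2 (by linarith)
  have hz : √(T ^ 2 - (T * √x) ^ 2) = T * √(1 - x) := by
    rw [mul_pow, sq_sqrt hx0.le, ← mul_one_sub, sqrt_mul (sq_nonneg T), sqrt_sq hT.le]
  have hT' : T ^ (p + k + 1) = T ^ (p + 1) * T ^ ((k : ℝ) - 1) * T := by
    rw [← rpow_add hT, ← rpow_add_one hT.ne']
    ring_nf
  rw [momentKernel, hz, mul_div_assoc, ← rpow_natCast, ← rpow_sub_one (by positivity),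
    mul_rpow hT.le hs.le, mul_rpow hT.le ht.le, rpow_add_one hs.ne',
    ← rpow_div_two_eq_sqrt _ hx0.le, ← rpow_div_two_eq_sqrt _ (by linarith : 0 ≤ 1 - x), hT']
  field_simp

theorem integrableOn_momentKernel (hT : 0 < T) (hp : -2 < p) (k : ℕ) :
    IntegrableOn (momentKernel T p k) (Ioo 0 T) := by
  rw [integrableOn_Ioo_iff_comp_mul_sqrt hT]
  simp only [smul_eq_mul]
  refine IntegrableOn.congr_fun ?_ (fun x hx => (mul_momentKernel_mul_sqrt hT k hx).symm)
    measurableSet_Ioo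
  exact (integrableOn_rpow_mul_one_sub_rpow (by linarith)
    (by linarith [k.cast_nonneg (α := ℝ)])).const_mul _

theorem integral_momentKernel (hT : 0 < T) (hp : -2 < p) (k : ℕ) :
    ∫ r in Ioo 0 T, momentKernel T p k r
      = T ^ (p + k + 1) / 2 *
        (Gamma (p / 2 + 1) * Gamma (((k : ℝ) + 1) / 2) / Gamma ((p + k + 3) / 2)) := by
  rw [integral_Ioo_eq_integral_comp_mul_sqrt hT]
  simp only [smul_eq_mul]
  rw [setIntegral_congr_fun measurableSet_Ioo (fun x hx => mul_momentKernel_mul_sqrt hT k hx),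
    integral_const_mul, integral_rpow_mul_one_sub_rpow (by linarith)
      (by linarith [k.cast_nonneg (α := ℝ)]),
    show ((k : ℝ) - 1) / 2 + 1 = ((k : ℝ) + 1) / 2 by ring,
    show p / 2 + ((k : ℝ) - 1) / 2 + 2 = (p + k + 3) / 2 by ring]

lemma momentKernel_eq_mul_pow (k : ℕ) (r : ℝ) :
    momentKernel T p k r = momentKernel T p 0 r * √(T ^ 2 - r ^ 2) ^ k := by
  simp only [momentKernel]
  ring

lemma norm_mul_momentKernel_le (a : ℝ) (k : ℕ) {r : ℝ} (hr : r ∈ Ioo 0 T) :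
    ‖a ^ k / k.factorial * momentKernel T p k r‖
      ≤ (|a| * T) ^ k / k.factorial * momentKernel T p 0 r := by
  have hz : √(T ^ 2 - r ^ 2) ≤ T := by
    rw [sqrt_le_left (by linarith [hr.1, hr.2])]
    nlinarith [hr.1]
  have hK0 : 0 ≤ momentKernel T p 0 r := by
    simpa [momentKernel] using div_nonneg (rpow_nonneg hr.1.le (p + 1)) (sqrt_nonneg _)
  rw [momentKernel_eq_mul_pow, norm_mul, norm_mul, norm_div, norm_pow, Real.norm_eq_abs,
    norm_natCast, Real.norm_of_nonneg hK0, Real.norm_of_nonneg (by positivity), mul_pow]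
  calc |a| ^ k / k.factorial * (momentKernel T p 0 r * √(T ^ 2 - r ^ 2) ^ k)
      ≤ |a| ^ k / k.factorial * (momentKernel T p 0 r * T ^ k) := by gcongr
    _ = _ := by ring

lemma hasSum_mul_momentKernel (a r : ℝ) :
    HasSum (fun k : ℕ => a ^ k / k.factorial * momentKernel T p k r)
      (r ^ (p + 1) * exp (a * √(T ^ 2 - r ^ 2)) / √(T ^ 2 - r ^ 2)) := by
  have hexp := NormedSpace.expSeries_div_hasSum_exp (a * √(T ^ 2 - r ^ 2))
  rw [← Real.exp_eq_exp_ℝ] at hexp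
  have hsum : r ^ (p + 1) * exp (a * √(T ^ 2 - r ^ 2)) / √(T ^ 2 - r ^ 2)
      = exp (a * √(T ^ 2 - r ^ 2)) * momentKernel T p 0 r := by
    simp only [momentKernel]
    ring
  rw [hsum]
  exact (hexp.mul_right _).congr_fun fun k => by
    rw [momentKernel_eq_mul_pow]
    ring

theorem hasSum_integral_momentKernel (a : ℝ) (hT : 0 < T) (hp : -2 < p) :
    HasSum (fun k : ℕ => a ^ k / k.factorial * ∫ r in Ioo 0 T, momentKernel T p k r)
      (∫ r in Ioo 0 T, r ^ (p + 1) * exp (a * √(T ^ 2 - r ^ 2)) / √(T ^ 2 - r ^ 2)) := by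
  simp_rw [← integral_const_mul]
  refine hasSum_integral_of_dominated_convergence
    (fun k r => (|a| * T) ^ k / k.factorial * momentKernel T p 0 r)
    (fun k => ((integrableOn_momentKernel hT hp k).const_mul _).aestronglyMeasurable)
    (fun k => ae_restrict_of_forall_mem measurableSet_Ioo fun r hr =>
      norm_mul_momentKernel_le a k hr)
    (ae_of_all _ fun r => ((NormedSpace.expSeries_div_hasSum_exp (|a| * T)).mul_right _).summable)
    ?_ (ae_of_all _ fun r => hasSum_mul_momentKernel a r)
  simp_rw [tsum_mul_right]
  exact (integrableOn_momentKernel hT hp 0).const_mul _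

end MomentKernel

theorem moment_integral_series (a T p : ℝ) (hT : 0 < T) (hp : 1 ≤ p) :
    (∫ r in (0:ℝ)..T,
        r ^ (p + 1) * Real.exp (a * Real.sqrt (T ^ 2 - r ^ 2)) /
          Real.sqrt (T ^ 2 - r ^ 2)
      = ∑' k : ℕ, a ^ k / (Nat.factorial k) *
          (T ^ (p + (k : ℝ) + 1) / 2) *
          (Real.Gamma (p / 2 + 1) * Real.Gamma (((k : ℝ) + 1) / 2) /
            Real.Gamma ((p + (k : ℝ) + 3) / 2))) ∧
    Summable (fun k : ℕ => a ^ k / (Nat.factorial k) *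
          (T ^ (p + (k : ℝ) + 1) / 2) *
          (Real.Gamma (p / 2 + 1) * Real.Gamma (((k : ℝ) + 1) / 2) /
            Real.Gamma ((p + (k : ℝ) + 3) / 2))) := by
  have hp' : -2 < p := by linarith
  have hsum := hasSum_integral_momentKernel a hT hp'
  simp only [integral_momentKernel hT hp', ← mul_assoc] at hsum
  rw [intervalIntegral.integral_of_le hT.le, integral_Ioc_eq_integral_Ioo]
  exact ⟨hsum.tsum_eq.symm, hsum.summable⟩
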